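/- Let P(z) = z + z² ∈ ℂ_p[z], let B = {z ∈ ℂ_p : |z| < 1}, and let g : B → B be the inverse of the bijection P|_B : B → B. Then g is not an analytic element on B: there is no rational function R ∈ ℂ_p(z) without poles in B with sup{ |R(z) − g(z)| : z ∈ B } < 1, and hence no sequence of rational functions without poles in B converges to g uniformly on B. In particular the analytic element P|_B is not bi-analytic. -/

import Mathlib

/-- `K` is (a field isometrically isomorphic to) the field `ℂ_p` of `p`-adic complex
numbers: a complete algebraically closed ultrametric normed field, extending `ℚ_p`
isometrically, in which the elements algebraic over `ℚ_p` are dense. -/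
structure IsPadicComplexField (p : ℕ) [Fact p.Prime] (K : Type*)
    [NontriviallyNormedField K] [Algebra ℚ_[p] K] : Prop where
  isAlgClosed : IsAlgClosed K
  completeSpace : CompleteSpace K
  isUltrametricDist : IsUltrametricDist K
  norm_algebraMap : ∀ q : ℚ_[p], ‖algebraMap ℚ_[p] K q‖ = ‖q‖
  dense_algebraic : Dense {x : K | IsAlgebraic ℚ_[p] x}

/-- `R` coincides on `D` with a rational function without poles in `D`. -/
def IsRationalNoPoles {K : Type*} [NormedField K] (D : Set K) (R : K → K) : Prop :=
  ∃ q₁ q₂ : Polynomial K, (∀ z ∈ D, q₂.eval z ≠ 0) ∧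
    ∀ z ∈ D, R z = q₁.eval z / q₂.eval z

/-- An analytic element on `D`: a uniform limit on `D` of rational functions
without poles in `D`. -/
def IsAnalyticElement {K : Type*} [NormedField K] (D : Set K) (f : K → K) : Prop :=
  ∀ ε : ℝ, 0 < ε → ∃ R : K → K, IsRationalNoPoles D R ∧ ∀ z ∈ D, ‖R z - f z‖ ≤ ε

/-!
If a rational function `R = q₁ / q₂` without poles in the open unit disc `B` approximated `g`
within `c < 1`, then `R ∘ P - id = N / (q₂ ∘ P)` for the polynomial `N = q₁ ∘ P - X · q₂ ∘ P`.
All roots of `q₂` lie outside `B`, so `|q₂|` is constant, equal to `M = |q₂(0)|`, on `B`, and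
`|N| ≤ c M` on `B`. Since absolute values of `ℂ_p` accumulate at `1`, the maximum principle
extends this bound to the closed disc, in particular to `-1` and `0`, which `P` both sends
to `0`. Hence `M = |N(-1) - N(0)| ≤ c M`, which is absurd.
-/

open Polynomial Filter Topology IsUltrametricDist

section Ultrametric

variable {K : Type*} [NontriviallyNormedField K] [IsUltrametricDist K]

theorem norm_sub_eq_max_of_norm_ne_norm {z α : K} (h : ‖z‖ ≠ ‖α‖) :
    ‖z - α‖ = max ‖z‖ ‖α‖ := by
  rw [sub_eq_add_neg, norm_add_eq_max_of_norm_ne_norm (by rwa [norm_neg]), norm_neg]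

theorem norm_sub_le_max (x y : K) : ‖x - y‖ ≤ max ‖x‖ ‖y‖ := by
  simpa only [sub_eq_add_neg, norm_neg] using norm_add_le_max x (-y)

theorem norm_mul_norm_sub_le_norm_sub {z w α : K} (hz : ‖z‖ ≤ 1) (hw : ‖w‖ ≤ 1)
    (hzα : ‖z‖ ≠ ‖α‖) : ‖z‖ * ‖w - α‖ ≤ ‖z - α‖ := by
  have hwα : ‖w - α‖ ≤ max 1 ‖α‖ := (norm_sub_le_max w α).trans (max_le_max_right _ hw)
  rw [norm_sub_eq_max_of_norm_ne_norm hzα]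
  calc ‖z‖ * ‖w - α‖ ≤ ‖z‖ * max 1 ‖α‖ := by gcongr
    _ = max ‖z‖ (‖z‖ * ‖α‖) := by rw [mul_max_of_nonneg _ _ (norm_nonneg z), mul_one]
    _ ≤ max ‖z‖ ‖α‖ := by gcongr; exact mul_le_of_le_one_left (norm_nonneg α) hz

end Ultrametric

namespace Polynomial

variable {K : Type*} [NontriviallyNormedField K] [IsAlgClosed K]

theorem norm_eval_eq_mul_prod_roots (q : K[X]) (z : K) :
    ‖q.eval z‖ = ‖q.leadingCoeff‖ * (q.roots.map fun α => ‖z - α‖).prod := by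
  rw [(IsAlgClosed.splits q).eval_eq_prod_roots, norm_mul]
  exact congrArg _ ((map_multiset_prod (normHom : K →*₀ ℝ) _).trans (by simp [Multiset.map_map]))

variable [IsUltrametricDist K]

theorem norm_eval_eq_norm_eval_zero {q : K[X]} (hq : ∀ z : K, ‖z‖ < 1 → q.eval z ≠ 0)
    {z : K} (hz : ‖z‖ < 1) : ‖q.eval z‖ = ‖q.eval 0‖ := by
  have hq₀ : q ≠ 0 := by rintro rfl; exact hq 0 (by simp) eval_zero
  have hroots : ∀ α ∈ q.roots, 1 ≤ ‖α‖ := fun α hα => not_lt.1 fun h =>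
    hq α h ((mem_roots hq₀).1 hα)
  rw [norm_eval_eq_mul_prod_roots, norm_eval_eq_mul_prod_roots]
  congr 2
  refine Multiset.map_congr rfl fun α hα => ?_
  rw [zero_sub, norm_neg, norm_sub_eq_max_of_norm_ne_norm (hz.trans_le (hroots α hα)).ne,
    max_eq_right (hz.trans_le (hroots α hα)).le]

theorem pow_mul_norm_eval_le_norm_eval (q : K[X]) {z w : K} (hz : ‖z‖ ≤ 1) (hw : ‖w‖ ≤ 1)
    (hzroots : ∀ α ∈ q.roots, ‖z‖ ≠ ‖α‖) :
    ‖z‖ ^ Multiset.card q.roots * ‖q.eval w‖ ≤ ‖q.eval z‖ := by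
  rw [norm_eval_eq_mul_prod_roots, norm_eval_eq_mul_prod_roots, mul_left_comm,
    ← Multiset.prod_replicate, ← Multiset.map_const', ← Multiset.prod_map_mul]
  gcongr
  exact Multiset.prod_map_le_prod_map₀ _ _ (fun α _ => by positivity)
    fun α hα => norm_mul_norm_sub_le_norm_sub hz hw (hzroots α hα)

theorem norm_eval_le_of_forall_norm_lt_one
    (hK : ∃ᶠ r in 𝓝[<] (1 : ℝ), r ∈ Set.range (‖·‖ : K → ℝ)) (q : K[X]) {C : ℝ}
    (hC : ∀ z : K, ‖z‖ < 1 → ‖q.eval z‖ ≤ C) {w : K} (hw : ‖w‖ ≤ 1) : ‖q.eval w‖ ≤ C := by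
  have hlim : Tendsto (fun r : ℝ => r ^ Multiset.card q.roots * ‖q.eval w‖) (𝓝[<] 1)
      (𝓝 ‖q.eval w‖) :=
    (Continuous.tendsto' (by fun_prop) 1 _ (by simp)).mono_left nhdsWithin_le_nhds
  have hgood : ∀ᶠ r in 𝓝[<] (1 : ℝ), r < 1 ∧ r ∉ (q.roots.map (‖·‖)).toFinset :=
    (eventually_mem_nhdsWithin (s := Set.Iio 1)).and <|
      (nhdsLT_le_nhdsNE 1).trans (nhdsNE_le_cofinite 1) (Finset.eventually_cofinite_notMem _)
  refine le_of_tendsto_of_frequently hlim ((hK.and_eventually hgood).mono ?_)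
  rintro _ ⟨⟨z, rfl⟩, hz, hzroots⟩
  refine (pow_mul_norm_eval_le_norm_eval q hz.le hw fun α hα h => hzroots ?_).trans (hC z hz)
  exact Multiset.mem_toFinset.2 (Multiset.mem_map.2 ⟨α, hα, h.symm⟩)

end Polynomial

namespace IsPadicComplexField

variable {p : ℕ} [Fact p.Prime] {K : Type*} [NontriviallyNormedField K] [Algebra ℚ_[p] K]

theorem frequently_mem_range_norm (hK : IsPadicComplexField p K) :
    ∃ᶠ r in 𝓝[<] (1 : ℝ), r ∈ Set.range (‖·‖ : K → ℝ) := by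
  have := hK.isAlgClosed
  have hp : (p : ℝ)⁻¹ < 1 := inv_lt_one_of_one_lt₀ (mod_cast (Fact.out : p.Prime).one_lt)
  refine (nhdsLT_basis 1).frequently_iff.2 fun t ht => ?_
  obtain ⟨k, hk⟩ :=
    exists_pow_lt_of_lt_one (inv_pos.2 (Nat.cast_pos.2 (Fact.out : p.Prime).pos)) ht
  have hk₀ : k ≠ 0 := by
    rintro rfl
    rw [pow_zero] at hk
    exact (hk.trans hp).false
  -- a `k`-th root of `p` has absolute value `p ^ (-1 / k)`
  obtain ⟨z, hz⟩ := IsAlgClosed.exists_pow_nat_eq (algebraMap ℚ_[p] K p) (Nat.pos_of_ne_zero hk₀)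
  have hzk : ‖z‖ ^ k = (p : ℝ)⁻¹ := by rw [← norm_pow, hz, hK.norm_algebraMap, Padic.norm_p]
  refine ⟨‖z‖, ⟨lt_of_pow_lt_pow_left₀ k (norm_nonneg z) (hzk ▸ hk), ?_⟩, z, rfl⟩
  exact (pow_lt_one_iff_of_nonneg (norm_nonneg z) hk₀).1 (hzk ▸ hp)

end IsPadicComplexField

section RationalApproximation

variable {K : Type*} [NontriviallyNormedField K] [IsAlgClosed K] [IsUltrametricDist K]

theorem norm_sub_le_of_isRationalNoPoles_of_leftInverse
    (hK : ∃ᶠ r in 𝓝[<] (1 : ℝ), r ∈ Set.range (‖·‖ : K → ℝ)) {P : K[X]}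
    (hP : ∀ z : K, ‖z‖ < 1 → ‖P.eval z‖ < 1) {g : K → K}
    (hg : ∀ z : K, ‖z‖ < 1 → g (P.eval z) = z) {R : K → K}
    (hR : IsRationalNoPoles {z : K | ‖z‖ < 1} R) {c : ℝ}
    (hRg : ∀ z : K, ‖z‖ < 1 → ‖R z - g z‖ ≤ c) {w₁ w₂ : K} (hw₁ : ‖w₁‖ ≤ 1) (hw₂ : ‖w₂‖ ≤ 1)
    (hPw : P.eval w₁ = P.eval w₂) (hPw₁ : ‖P.eval w₁‖ < 1) : ‖w₁ - w₂‖ ≤ c := by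
  obtain ⟨q₁, q₂, hq₂, hR⟩ := hR
  set M := ‖q₂.eval 0‖
  have hM : 0 < M := norm_pos_iff.2 (hq₂ 0 (by simp))
  -- `R ∘ P - id` is `N / q₂ ∘ P`, and `‖q₂ ∘ P‖ = M` on the open disc; the maximum principle
  -- carries the bound on `N` to `w₁` and `w₂`, where `R ∘ P` takes a single value.
  set N : K[X] := q₁.comp P - X * q₂.comp P
  have hN : ∀ z, N.eval z = q₁.eval (P.eval z) - z * q₂.eval (P.eval z) := by simp [N]
  have hN_le : ∀ z : K, ‖z‖ ≤ 1 → ‖N.eval z‖ ≤ c * M := by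
    refine fun z => norm_eval_le_of_forall_norm_lt_one hK N fun z hz => ?_
    have hPz := hP z hz
    calc ‖N.eval z‖ = ‖R (P.eval z) - g (P.eval z)‖ * ‖q₂.eval (P.eval z)‖ := by
          rw [hN, hR _ hPz, hg z hz, ← norm_mul, sub_mul, div_mul_cancel₀ _ (hq₂ _ hPz)]
      _ ≤ c * M := by
          rw [norm_eval_eq_norm_eval_zero hq₂ hPz]
          gcongr
          exact hRg _ hPz
  have hNsub : N.eval w₂ - N.eval w₁ = (w₁ - w₂) * q₂.eval (P.eval w₁) := by
    rw [hN, hN, hPw]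
    ring
  have hwM : ‖w₁ - w₂‖ * M ≤ c * M :=
    calc ‖w₁ - w₂‖ * M = ‖N.eval w₂ - N.eval w₁‖ := by
          rw [hNsub, norm_mul, norm_eval_eq_norm_eval_zero hq₂ hPw₁]
      _ ≤ max ‖N.eval w₂‖ ‖N.eval w₁‖ := norm_sub_le_max _ _
      _ ≤ c * M := max_le (hN_le w₂ hw₂) (hN_le w₁ hw₁)
  exact le_of_mul_le_mul_right hwM hM

end RationalApproximation

theorem inverse_of_square_plus_id_not_analytic_element_general
    {p : ℕ} [Fact p.Prime] {K : Type*} [NontriviallyNormedField K] [Algebra ℚ_[p] K]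
    (hK : IsPadicComplexField p K)
    (g : K → K)
    (hg_left : ∀ z : K, ‖z‖ < 1 → g (z + z ^ 2) = z) :
    (¬ ∃ R : K → K, IsRationalNoPoles {z : K | ‖z‖ < 1} R ∧
        ∃ c : ℝ, c < 1 ∧ ∀ z : K, ‖z‖ < 1 → ‖R z - g z‖ ≤ c) ∧
      ¬ IsAnalyticElement {z : K | ‖z‖ < 1} g := by
  have := hK.isAlgClosed
  have := hK.isUltrametricDist
  have hP : ∀ z : K, ‖z‖ < 1 → ‖(X + X ^ 2 : K[X]).eval z‖ < 1 := fun z hz => by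
    have hz2 : ‖z ^ 2‖ < 1 := by simpa [norm_pow] using pow_lt_one₀ (norm_nonneg z) hz two_ne_zero
    simpa using (norm_add_le_max z (z ^ 2)).trans_lt (max_lt hz hz2)
  have no_approx : ¬ ∃ R : K → K, IsRationalNoPoles {z : K | ‖z‖ < 1} R ∧
      ∃ c : ℝ, c < 1 ∧ ∀ z : K, ‖z‖ < 1 → ‖R z - g z‖ ≤ c := by
    rintro ⟨R, hR, c, hc, hRg⟩
    -- `-1` and `0` are both sent to `0` by `z ↦ z + z ^ 2`
    have h := norm_sub_le_of_isRationalNoPoles_of_leftInverse hK.frequently_mem_range_norm hP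
      (by simpa using hg_left) hR hRg (w₁ := -1) (w₂ := 0) (by simp) (by simp) (by simp)
      (by simp)
    norm_num at h
    linarith
  refine ⟨no_approx, fun hA => no_approx ?_⟩
  obtain ⟨R, hR, hRg⟩ := hA (1 / 2) (by norm_num)
  exact ⟨R, hR, 1 / 2, by norm_num, hRg⟩

theorem inverse_of_square_plus_id_not_analytic_element
    {p : ℕ} [Fact p.Prime] {K : Type*} [NontriviallyNormedField K] [Algebra ℚ_[p] K]
    (hK : IsPadicComplexField p K)
    (g : K → K)
    (hg_mem : ∀ w : K, ‖w‖ < 1 → ‖g w‖ < 1)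
    (hg_left : ∀ z : K, ‖z‖ < 1 → g (z + z ^ 2) = z)
    (hg_right : ∀ w : K, ‖w‖ < 1 → g w + (g w) ^ 2 = w) :
    (¬ ∃ R : K → K, IsRationalNoPoles {z : K | ‖z‖ < 1} R ∧
        ∃ c : ℝ, c < 1 ∧ ∀ z : K, ‖z‖ < 1 → ‖R z - g z‖ ≤ c) ∧
      ¬ IsAnalyticElement {z : K | ‖z‖ < 1} g :=
  inverse_of_square_plus_id_not_analytic_element_general hK g hg_left
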